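/- arXiv:1902.08064 — 2 statements merged into one kernel-verified Lean document; each statement's English description precedes it below -/
import Mathlib

section
/- Suppose λ, ν ∈ ℂ with Re λ > −1/2 and Re ν > 0. Then ∫_{−1}^1 ∫_{−1}^1 (1 − s²)^{λ−1/2} (t − s)_+^{2ν} ds dt = 2^{2λ+2ν+1} Γ(λ + 1/2) Γ(3/2 + λ + 2ν) / ((1 + 2ν) Γ(2 + 2λ + 2ν)). -/
open MeasureTheory intervalIntegral

/-- `y_+^α := y^α` for `y > 0`, `0` otherwise. -/
noncomputable def posPow (y : ℝ) (α : ℂ) : ℂ := if 0 < y then (y : ℂ) ^ α else 0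

/-!
The inner integral is elementary: `∫_{-1}^1 (t - s)_+^{2ν} dt = (1 - s)^{2ν+1} / (2ν + 1)`.
Writing `1 - s² = (1 + s)(1 - s)`, the outer integral becomes
`(2ν + 1)⁻¹ ∫_{-1}^1 (1 + s)^{a-1} (1 - s)^{b-1} ds` with `a = λ + 1/2`, `b = λ + 2ν + 3/2`,
which the affine substitution `s = 2x - 1` turns into `2^{a+b-1} B(a, b)`; then
`B(a, b) = Γ(a) Γ(b) / Γ(a + b)`.
-/

open Set Complex

lemma posPow_of_pos {y : ℝ} (hy : 0 < y) (α : ℂ) : posPow y α = (y : ℂ) ^ α := if_pos hy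

lemma posPow_of_nonpos {y : ℝ} (hy : y ≤ 0) (α : ℂ) : posPow y α = 0 := if_neg hy.not_gt

lemma integral_posPow_sub {α : ℂ} (hα : -1 < α.re) {a b s : ℝ} (has : a ≤ s)
    (hsb : s ≤ b) :
    ∫ t in a..b, posPow (t - s) α = ((b - s : ℝ) : ℂ) ^ (α + 1) / (α + 1) := by
  have hzero : EqOn (fun t => posPow (t - s) α) 0 (uIoo a s) := fun t ht => by
    rw [uIoo_of_le has] at ht
    exact posPow_of_nonpos (by linarith [ht.2]) α
  have hpow : EqOn (fun t => posPow (t - s) α) (fun t => ((t - s : ℝ) : ℂ) ^ α) (uIoo s b) :=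
    fun t ht => by
      rw [uIoo_of_le hsb] at ht
      exact posPow_of_pos (by linarith [ht.1]) α
  have hint : IntervalIntegrable (fun t => ((t - s : ℝ) : ℂ) ^ α) volume s b := by
    simpa using (intervalIntegrable_cpow' (a := s - s) (b := b - s) hα).comp_sub_right s
  have hα1 : α + 1 ≠ 0 := ne_of_apply_ne re (by simpa using (show α.re + 1 ≠ 0 by linarith))
  rw [← integral_add_adjacent_intervals (intervalIntegrable_const.congr_uIoo hzero.symm)
      (hint.congr_uIoo hpow.symm), integral_congr_uIoo hzero, integral_congr_uIoo hpow,
    integral_comp_sub_right (fun x : ℝ => (x : ℂ) ^ α), integral_cpow (Or.inl hα)]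
  simp [zero_cpow hα1]

lemma integral_sub_cpow_mul_sub_cpow (a b : ℂ) {c d : ℝ} (hcd : c < d) :
    ∫ s in c..d, ((s - c : ℝ) : ℂ) ^ (a - 1) * ((d - s : ℝ) : ℂ) ^ (b - 1) =
      ((d - c : ℝ) : ℂ) ^ (a + b - 1) * betaIntegral a b := by
  have hsub := smul_integral_comp_mul_add (a := 0) (b := 1)
    (fun s : ℝ => ((s - c : ℝ) : ℂ) ^ (a - 1) * ((d - s : ℝ) : ℂ) ^ (b - 1)) (d - c) c
  simp only [mul_zero, zero_add, mul_one, sub_add_cancel] at hsub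
  have hD : ((d - c : ℝ) : ℂ) ≠ 0 := ofReal_ne_zero.mpr (sub_ne_zero.mpr hcd.ne')
  rw [← hsub, real_smul, betaIntegral, ← intervalIntegral.integral_const_mul,
    ← intervalIntegral.integral_const_mul]
  refine integral_congr fun x hx => ?_
  rw [uIcc_of_le zero_le_one] at hx
  have hx' : (d - ((d - c) * x + c) : ℝ) = (d - c) * (1 - x) := by ring
  simp only [add_sub_cancel_right, hx']
  rw [ofReal_mul, ofReal_mul, mul_cpow_ofReal_nonneg (by linarith) hx.1,
    mul_cpow_ofReal_nonneg (by linarith) (by linarith [hx.2]),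
    show a + b - 1 = (a - 1) + (b - 1) + 1 by ring, cpow_add _ _ hD, cpow_add _ _ hD, cpow_one]
  push_cast
  ring

lemma integral_one_sub_sq_cpow_mul_posPow_sub (p : ℂ) {α : ℂ} (hα : -1 < α.re) {s : ℝ}
    (hs : s ∈ Ioo (-1) 1) :
    ∫ t in (-1 : ℝ)..1, ((1 - s ^ 2 : ℝ) : ℂ) ^ p * posPow (t - s) α =
      (α + 1)⁻¹ * (((s - -1 : ℝ) : ℂ) ^ p * ((1 - s : ℝ) : ℂ) ^ (p + α + 1)) := by
  have h1s : ((1 - s : ℝ) : ℂ) ≠ 0 := ofReal_ne_zero.mpr (by linarith [hs.2])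
  rw [intervalIntegral.integral_const_mul, integral_posPow_sub hα hs.1.le hs.2.le,
    show (1 - s ^ 2 : ℝ) = (s - -1) * (1 - s) by ring, ofReal_mul,
    mul_cpow_ofReal_nonneg (by linarith [hs.1]) (by linarith [hs.2]), add_assoc p,
    cpow_add p _ h1s]
  ring

theorem stmt15 (lam ν : ℂ) (hlam : -(1 / 2 : ℝ) < lam.re) (hν : 0 < ν.re) :
    (∫ s in (-1 : ℝ)..1, ∫ t in (-1 : ℝ)..1,
        ((1 - s ^ 2 : ℝ) : ℂ) ^ (lam - 1 / 2 : ℂ) * posPow (t - s) (2 * ν)) =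
      (2 : ℂ) ^ (2 * lam + 2 * ν + 1) * Complex.Gamma (lam + 1 / 2) *
          Complex.Gamma (3 / 2 + lam + 2 * ν) /
        ((1 + 2 * ν) * Complex.Gamma (2 + 2 * lam + 2 * ν)) := by
  set a := lam + 1 / 2
  set b := 3 / 2 + lam + 2 * ν
  have ha : 0 < a.re := by simpa [a] using (show 0 < lam.re + 1 / 2 by linarith)
  have hb : 0 < b.re := by simpa [b] using (show 0 < 3 / 2 + lam.re + 2 * ν.re by linarith)
  have h2ν : -1 < (2 * ν).re := by simpa using (show -1 < 2 * ν.re by linarith)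
  have hν1 : 1 + 2 * ν ≠ 0 :=
    ne_of_apply_ne re (by simpa using (show 1 + 2 * ν.re ≠ 0 by linarith))
  have inner : EqOn
      (fun s : ℝ =>
        ∫ t in (-1 : ℝ)..1, ((1 - s ^ 2 : ℝ) : ℂ) ^ (lam - 1 / 2) * posPow (t - s) (2 * ν))
      (fun s => (1 + 2 * ν)⁻¹ * (((s - -1 : ℝ) : ℂ) ^ (a - 1) * ((1 - s : ℝ) : ℂ) ^ (b - 1)))
      (uIoo (-1) 1) := fun s hs => by
    rw [uIoo_of_le (by norm_num)] at hs
    dsimp only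
    rw [integral_one_sub_sq_cpow_mul_posPow_sub _ h2ν hs, add_comm (2 * ν),
      show a - 1 = lam - 1 / 2 by ring, show b - 1 = lam - 1 / 2 + 2 * ν + 1 by ring]
  have hΓ := Gamma_mul_Gamma_eq_betaIntegral ha hb
  rw [show a + b = 2 + 2 * lam + 2 * ν by ring] at hΓ
  rw [integral_congr_uIoo inner, intervalIntegral.integral_const_mul,
    integral_sub_cpow_mul_sub_cpow a b (by norm_num : (-1 : ℝ) < 1),
    show a + b - 1 = 2 * lam + 2 * ν + 1 by ring, mul_assoc _ (Gamma a), hΓ]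
  have hΓne : Gamma (2 + 2 * lam + 2 * ν) ≠ 0 :=
    Gamma_ne_zero_of_re_pos (by simpa using (show 0 < 2 + 2 * lam.re + 2 * ν.re by linarith))
  rw [eq_div_iff (mul_ne_zero hν1 hΓne)]
  field_simp
  norm_num
  ring
end

section
/- For ν ∈ ℂ with Re ν > 0, (1/(2π)) ∫_{−∞}^∞ ∫_{−∞}^∞ e^{−(s² + t²)/2} |s − t|^{2ν} ds dt = Γ(1 + 2ν)/Γ(1 + ν). (This is the n = 2 case of the Mehta integral.) -/
/-!
Substituting `t = s - u` and completing the square gives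
`e^{-(s² + t²)/2} = e^{-(s - u/2)²} e^{-u²/4}`, so by Fubini the integral in `s` contributes `√π`
and the double integral becomes `√π ∫ |u|^{2ν} e^{-u²/4} du = √π 2^{2ν+1} Γ(ν + 1/2)`, a Mellin
transform of a Gaussian. Legendre's duplication formula turns `2^{2ν} Γ(ν + 1/2) / √π` into
`Γ(1 + 2ν) / Γ(1 + ν)`.
-/

open MeasureTheory Set

theorem integrable_comp_abs_of_integrableOn_Ioi {E : Type*} [NormedAddCommGroup E] {f : ℝ → E}
    (hf : IntegrableOn f (Ioi 0)) : Integrable fun x => f |x| := by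
  have h_Ioi : IntegrableOn (fun x => f |x|) (Ioi 0) :=
    hf.congr_fun (fun x hx => by rw [abs_of_pos hx]) measurableSet_Ioi
  refine integrableOn_univ.mp ?_
  rw [← Iic_union_Ioi (a := (0 : ℝ)), integrableOn_union]
  refine ⟨?_, h_Ioi⟩
  rw [integrableOn_Iic_iff_integrableOn_Iio,
    ← (Measure.measurePreserving_neg (volume : Measure ℝ)).integrableOn_comp_preimage
      (Homeomorph.neg ℝ).measurableEmbedding]
  simpa [Function.comp_def] using h_Ioi

theorem integral_comp_abs_of_integrableOn_Ioi {E : Type*} [NormedAddCommGroup E]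
    [NormedSpace ℝ E] {f : ℝ → E} (hf : IntegrableOn f (Ioi 0)) :
    ∫ x, f |x| = (2 : ℝ) • ∫ x in Ioi 0, f x := by
  have h := integrable_comp_abs_of_integrableOn_Ioi hf
  rw [← intervalIntegral.integral_Iic_add_Ioi h.integrableOn h.integrableOn, two_smul]
  have h_Ioi : ∫ x in Ioi 0, f |x| = ∫ x in Ioi 0, f x :=
    setIntegral_congr_fun measurableSet_Ioi fun x hx => by rw [abs_of_pos hx]
  have h_Iic := integral_comp_neg_Ioi 0 fun x => f |x|
  simp only [neg_zero, abs_neg] at h_Iic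
  rw [← h_Iic, h_Ioi]

theorem integrable_ofReal_exp_neg_sq : Integrable fun x : ℝ => (Real.exp (-x ^ 2) : ℂ) := by
  have h := integrable_exp_neg_mul_sq one_pos
  simp only [neg_mul, one_mul] at h
  exact h.ofReal

theorem integral_ofReal_exp_neg_sq : ∫ x : ℝ, (Real.exp (-x ^ 2) : ℂ) = √Real.pi := by
  have h := integral_gaussian 1
  simp only [neg_mul, one_mul, div_one] at h
  exact integral_ofReal.trans (congrArg _ h)

theorem integrableOn_cpow_mul_exp_neg_mul_sq {a : ℂ} (ha : -1 < a.re) {b : ℝ} (hb : 0 < b) :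
    IntegrableOn (fun x : ℝ => (x : ℂ) ^ a * Real.exp (-b * x ^ 2)) (Ioi 0) := by
  refine (integrableOn_rpow_mul_exp_neg_mul_sq hb ha).mono' ?_ ?_
  · refine ContinuousOn.aestronglyMeasurable (fun x hx => ?_) measurableSet_Ioi
    exact ((Complex.continuousAt_ofReal_cpow_const x a (Or.inr (ne_of_gt hx))).mul
      (by fun_prop)).continuousWithinAt
  · filter_upwards [ae_restrict_mem measurableSet_Ioi] with x hx
    rw [norm_mul, Complex.norm_cpow_eq_rpow_re_of_pos hx, Complex.norm_real, Real.norm_eq_abs,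
      abs_of_pos (Real.exp_pos _)]

theorem integral_Ioi_cpow_mul_exp_neg_mul_sq {a : ℂ} (ha : -1 < a.re) {b : ℝ} (hb : 0 < b) :
    ∫ x in Ioi (0 : ℝ), (x : ℂ) ^ a * Real.exp (-b * x ^ 2) =
      (b : ℂ) ^ (-(a + 1) / 2) / 2 * Complex.Gamma ((a + 1) / 2) := by
  have h_mellin : ∫ x in Ioi (0 : ℝ), (x : ℂ) ^ a * Real.exp (-b * x ^ 2) =
      mellin (fun t : ℝ => (Real.exp (-(t ^ (2 : ℝ) * b)) : ℂ)) (a + 1) := by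
    simp only [mellin, smul_eq_mul, add_sub_cancel_right]
    refine setIntegral_congr_fun measurableSet_Ioi fun t _ => ?_
    rw [Real.rpow_two, neg_mul, mul_comm b]
  have ha' : 0 < ((a + 1) / 2).re := by
    simp only [Complex.div_ofNat_re, Complex.add_re, Complex.one_re]; linarith
  rw [h_mellin, mellin_comp_rpow (fun t => (Real.exp (-(t * b)) : ℂ)),
    mellin_comp_mul_right (fun t => (Real.exp (-t) : ℂ)) _ hb, ← Complex.GammaIntegral_eq_mellin,
    Complex.ofReal_ofNat, ← Complex.Gamma_eq_integral ha', Complex.real_smul, smul_eq_mul,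
    abs_two, neg_div]
  push_cast
  ring

theorem integrable_abs_cpow_mul_exp_neg_mul_sq {a : ℂ} (ha : -1 < a.re) {b : ℝ} (hb : 0 < b) :
    Integrable fun x : ℝ => ((|x| : ℝ) : ℂ) ^ a * Real.exp (-b * x ^ 2) := by
  simpa only [sq_abs] using
    integrable_comp_abs_of_integrableOn_Ioi (integrableOn_cpow_mul_exp_neg_mul_sq ha hb)

theorem integral_abs_cpow_mul_exp_neg_mul_sq {a : ℂ} (ha : -1 < a.re) {b : ℝ} (hb : 0 < b) :
    ∫ x : ℝ, ((|x| : ℝ) : ℂ) ^ a * Real.exp (-b * x ^ 2) =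
      (b : ℂ) ^ (-(a + 1) / 2) * Complex.Gamma ((a + 1) / 2) := by
  have h := integral_comp_abs_of_integrableOn_Ioi (integrableOn_cpow_mul_exp_neg_mul_sq ha hb)
  simp only [sq_abs] at h
  rw [h, integral_Ioi_cpow_mul_exp_neg_mul_sq ha hb, Complex.real_smul]
  push_cast
  ring

theorem integral_integral_comp_sub_mul_mul {𝕜 : Type*} [RCLike 𝕜] {k g : ℝ → 𝕜}
    (hk_cont : Continuous k) (hk : Integrable k) (hg : Integrable g) (c : ℝ) :
    ∫ s, ∫ u, k (s - c * u) * g u = (∫ s, k s) * ∫ u, g u := by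
  have h_int : Integrable (Function.uncurry fun s u => k (s - c * u) * g u)
      (volume.prod volume) := by
    refine (integrable_prod_iff' ?_).mpr ⟨ae_of_all _ fun u => ?_, ?_⟩
    · exact (hk_cont.comp (by fun_prop)).aestronglyMeasurable.mul hg.1.comp_snd
    · exact (hk.comp_sub_right (c * u)).mul_const (g u)
    · simp only [Function.uncurry_apply_pair, norm_mul, integral_mul_const]
      simp_rw [integral_sub_right_eq_self (fun s => ‖k s‖)]
      exact hg.norm.const_mul _
  rw [integral_integral_swap h_int]
  simp_rw [integral_mul_const, integral_sub_right_eq_self (fun s => k s), integral_const_mul]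

/-- The weight `1 / 4` is written `(2 ^ 2)⁻¹` so that `Complex.ofReal_inv_sq_cpow_neg_div_two`
evaluates the power `(1 / 4) ^ (-(a + 1) / 2)` produced by the Gaussian moment. -/
theorem integral_exp_neg_sq_add_sq_div_two_mul_abs_sub_cpow (s : ℝ) (a : ℂ) :
    ∫ t : ℝ, (Real.exp (-(s ^ 2 + t ^ 2) / 2) : ℂ) * ((|s - t| : ℝ) : ℂ) ^ a =
      ∫ u : ℝ, (Real.exp (-(s - 1 / 2 * u) ^ 2) : ℂ) *
        (((|u| : ℝ) : ℂ) ^ a * Real.exp (-(2 ^ 2)⁻¹ * u ^ 2)) := by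
  rw [← integral_sub_left_eq_self _ volume s]
  congr 1 with u
  have h_exp : Real.exp (-(s ^ 2 + (s - u) ^ 2) / 2) =
      Real.exp (-(s - 1 / 2 * u) ^ 2) * Real.exp (-(2 ^ 2)⁻¹ * u ^ 2) := by
    rw [← Real.exp_add]; ring_nf
  simp only [sub_sub_cancel, h_exp, Complex.ofReal_mul]
  ring

theorem Complex.ofReal_inv_sq_cpow_neg_div_two {x : ℝ} (hx : 0 < x) (w : ℂ) :
    (((x ^ 2)⁻¹ : ℝ) : ℂ) ^ (-w / 2) = (x : ℂ) ^ w := by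
  rw [cpow_def_of_ne_zero (by simpa using hx.ne'), cpow_def_of_ne_zero (by simpa using hx.ne'),
    ← ofReal_log (by positivity), Real.log_inv, Real.log_pow, ← ofReal_log hx.le]
  push_cast
  ring_nf

theorem Complex.Gamma_one_add_two_mul_div_Gamma_one_add {ν : ℂ} (hν : ∀ m : ℕ, ν ≠ -m) :
    Gamma (1 + 2 * ν) / Gamma (1 + ν) = 2 ^ (2 * ν) * Gamma (ν + 1 / 2) / (√Real.pi : ℂ) := by
  have hν₀ : ν ≠ 0 := by simpa using hν 0
  have hπ : (√Real.pi : ℂ) ≠ 0 := ofReal_ne_zero.mpr (Real.sqrt_ne_zero'.mpr Real.pi_pos)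
  have h_two : (2 : ℂ) ^ (1 - 2 * ν) * 2 ^ (2 * ν) = 2 := by
    rw [← cpow_add _ _ two_ne_zero, sub_add_cancel, cpow_one]
  rw [add_comm 1, add_comm 1, Gamma_add_one _ (mul_ne_zero two_ne_zero hν₀),
    Gamma_add_one _ hν₀, div_eq_div_iff (mul_ne_zero hν₀ (Gamma_ne_zero hν)) hπ]
  linear_combination
    -(2 ^ (2 * ν) * ν) * Gamma_mul_Gamma_add_half ν - ν * Gamma (2 * ν) * √Real.pi * h_two

theorem stmt17 (ν : ℂ) (hν : 0 < ν.re) :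
    (1 / (2 * (Real.pi : ℂ))) *
        ∫ s : ℝ, ∫ t : ℝ,
          (Real.exp (-(s ^ 2 + t ^ 2) / 2) : ℂ) * ((|s - t| : ℝ) : ℂ) ^ (2 * ν) =
      Complex.Gamma (1 + 2 * ν) / Complex.Gamma (1 + ν) := by
  have h_re : -1 < (2 * ν).re := by
    simp only [Complex.mul_re, Complex.re_ofNat, Complex.im_ofNat, zero_mul, sub_zero]; linarith
  have h_sq : ((√Real.pi : ℝ) : ℂ) ^ 2 = Real.pi := by
    rw [← Complex.ofReal_pow, Real.sq_sqrt Real.pi_pos.le]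
  simp_rw [integral_exp_neg_sq_add_sq_div_two_mul_abs_sub_cpow]
  rw [integral_integral_comp_sub_mul_mul (k := fun x => (Real.exp (-x ^ 2) : ℂ)) (by fun_prop)
      integrable_ofReal_exp_neg_sq (integrable_abs_cpow_mul_exp_neg_mul_sq h_re (by norm_num)),
    integral_ofReal_exp_neg_sq, integral_abs_cpow_mul_exp_neg_mul_sq h_re (by norm_num),
    Complex.ofReal_inv_sq_cpow_neg_div_two two_pos,
    Complex.Gamma_one_add_two_mul_div_Gamma_one_add
      fun m h => (Nat.cast_nonneg m).not_gt (by simpa [h] using hν),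
    show (2 * ν + 1) / 2 = ν + 1 / 2 by ring, Complex.ofReal_ofNat,
    Complex.cpow_add _ _ two_ne_zero, Complex.cpow_one, ← h_sq]
  field_simp
end
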